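/- arXiv:2501.05145 — 4 statements merged into one kernel-verified Lean document; each statement's English description precedes it below -/
import Mathlib

section
/- Let B be a balanced bipartite graph with parts V1, V2 of size n each, n odd, and minimum degree at least n/2 + 1 (equivalently, at least (n+3)/2). For a vertex subset S with |S| = n + 1, the induced subgraph B[S] is a forest if and only if min(|S ∩ V1|, |S ∩ V2|) = 1. -/
/-!
Write `n = 2m + 1` and `a = |S ∩ V₁|`, `b = |S ∩ V₂|`, so `a + b = 2m + 2`. If one of them is `1`,
every edge of `B[S]` passes through that single vertex, so `B[S]` is a star forest. Otherwise, by
symmetry `2 ≤ a ≤ m + 1`. A vertex of `S ∩ V₁` has degree at least `m + 2` and at most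
`|V₂ \ S| = a - 1` neighbours outside `S`, so `B[S]` has at least `a (m + 3 - a) ≥ 2m + 2` edges,
more than the `|S| - 1 = 2m + 1` edges a forest on `S` can have.
-/
open Finset SimpleGraph

namespace SimpleGraph

variable {V : Type*} {G : SimpleGraph V}

theorem IsAcyclic.card_edgeFinset_add_one_le [Fintype V] [Nonempty V] [Fintype G.edgeSet]
    (hG : G.IsAcyclic) : #G.edgeFinset + 1 ≤ Fintype.card V := by
  classical
  obtain ⟨T, hGT, hT⟩ := exists_maximal_isAcyclic_of_le_isAcyclic le_top hG
  have hTree : T.IsTree := maximal_isAcyclic_iff_isTree.mp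
    ⟨hT.prop.2, fun H hH hTH => hT.le_of_ge ⟨le_top, hH⟩ hTH⟩
  rw [← hTree.card_edgeFinset]
  exact Nat.add_le_add_right (card_le_card (edgeFinset_mono hGT)) 1

theorem isAcyclic_of_forall_adj_eq_or_eq (c : V) (hc : ∀ u v, G.Adj u v → u = c ∨ v = c) :
    G.IsAcyclic :=
  (isAcyclic_starGraph c).anti fun u v h => starGraph_adj.mpr ⟨h.ne, hc u v h⟩

theorem IsBipartiteWith.induce {s t : Set V} (h : G.IsBipartiteWith s t) (u : Set V) :
    (G.induce u).IsBipartiteWith (Subtype.val ⁻¹' s) (Subtype.val ⁻¹' t) :=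
  ⟨h.disjoint.preimage _, fun _ _ hadj => h.mem_of_adj hadj⟩

theorem IsBipartiteWith.isAcyclic_induce_of_card_inter_eq_one [DecidableEq V] {s t S : Finset V}
    (h : G.IsBipartiteWith ↑s ↑t) (hS : #(S ∩ t) = 1) : (G.induce (S : Set V)).IsAcyclic := by
  obtain ⟨c, hc⟩ := card_eq_one.mp hS
  have hct : c ∈ S ∩ t := hc ▸ mem_singleton_self c
  have eq_c : ∀ x : (S : Set V), x.1 ∈ t → x = ⟨c, (mem_inter.mp hct).1⟩ := fun x hx =>
    Subtype.ext <| mem_singleton.mp <| hc ▸ mem_inter.mpr ⟨x.2, hx⟩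
  refine isAcyclic_of_forall_adj_eq_or_eq ⟨c, (mem_inter.mp hct).1⟩ fun x y hxy => ?_
  rcases h.mem_of_adj hxy with ⟨-, hy⟩ | ⟨hx, -⟩
  · exact .inr (eq_c y hy)
  · exact .inl (eq_c x hx)

theorem IsBipartiteWith.card_mul_le_card_edgeFinset [Fintype V] [DecidableRel G.Adj]
    {s t : Finset V} (h : G.IsBipartiteWith ↑s ↑t) {d : ℕ} (hd : ∀ v ∈ s, d ≤ G.degree v) :
    #s * d ≤ #G.edgeFinset := by
  rw [← isBipartiteWith_sum_degrees_eq_card_edges h, ← smul_eq_mul, ← sum_const]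
  exact sum_le_sum hd

theorem degree_induce_add_card_sdiff [Fintype V] [DecidableEq V] [DecidableRel G.Adj]
    (S : Finset V) (v : (S : Set V)) :
    (G.induce (S : Set V)).degree v + #(G.neighborFinset v \ S) = G.degree v := by
  have hmap :
      ((G.induce (S : Set V)).neighborFinset v).map (.subtype _) = G.neighborFinset v ∩ S := by
    ext; simp
  rw [← card_neighborFinset_eq_degree, ← card_neighborFinset_eq_degree, ← card_map (.subtype _),
    hmap, card_inter_add_card_sdiff]

theorem card_inter_add_card_inter_of_subset_union [DecidableEq V] {V1 V2 S : Finset V}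
    (hdisj : Disjoint V1 V2) (hS : S ⊆ V1 ∪ V2) : #(S ∩ V1) + #(S ∩ V2) = #S := by
  rw [← card_union_of_disjoint (hdisj.mono inter_subset_right inter_subset_right),
    ← inter_union_distrib_left, inter_eq_left.mpr hS]

theorem IsBipartiteWith.not_isAcyclic_induce [Fintype V] [DecidableEq V] [DecidableRel G.Adj]
    {V1 V2 S : Finset V} {m : ℕ} (h : G.IsBipartiteWith ↑V1 ↑V2) (hV2 : #V2 = 2 * m + 1)
    (hdeg : ∀ v ∈ V1, m + 2 ≤ G.degree v) (hS : S ⊆ V1 ∪ V2) (hcard : #S = 2 * m + 2)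
    (two_le : 2 ≤ #(S ∩ V1)) (le_half : #(S ∩ V1) ≤ m + 1) :
    ¬ (G.induce (S : Set V)).IsAcyclic := by
  intro hac
  set a := #(S ∩ V1)
  have hsplit := card_inter_add_card_inter_of_subset_union (disjoint_coe.mp h.disjoint) hS
  have hout : #(V2 \ S) = a - 1 := by
    have hV2_split := card_sdiff_add_card_inter V2 S
    rw [inter_comm] at hV2_split
    omega
  have hdegS : ∀ v : (S : Set V), v.1 ∈ V1 → m + 3 - a ≤ (G.induce (S : Set V)).degree v := by
    intro v hv
    have hsub : G.neighborFinset v \ S ⊆ V2 \ S :=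
      sdiff_subset_sdiff (fun w hw => h.mem_of_mem_adj hv ((G.mem_neighborFinset _ _).mp hw)) le_rfl
    have hsplit_deg := G.degree_induce_add_card_sdiff S v
    have hdeg_v := hdeg v hv
    have hsub_card := card_le_card hsub
    omega
  let A : Finset (S : Set V) := {v | v.1 ∈ V1}
  let B : Finset (S : Set V) := {v | v.1 ∈ V2}
  have hA : #A = a := by
    rw [← card_map (.subtype _)]
    congr 1
    ext; simp [A, and_comm]
  have hbip : (G.induce (S : Set V)).IsBipartiteWith ↑A ↑B := by
    convert h.induce (S : Set V) <;> ext <;> simp [A, B]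
  have hedges := hbip.card_mul_le_card_edgeFinset fun v hv => hdegS v (mem_filter.mp hv).2
  have : Nonempty (S : Set V) := (card_pos.mp (by omega)).to_subtype
  have hforest := hac.card_edgeFinset_add_one_le
  simp only [coe_sort_coe, Fintype.card_coe, hcard] at hforest
  rw [hA] at hedges
  have hd : 2 ≤ m + 3 - a := by omega
  have hk : a + (m + 3 - a) = m + 3 := by omega
  -- with `d = m + 3 - a`, `(a - 2) (d - 2) ≥ 0` gives `a d ≥ 2 (a + d) - 4 = 2m + 2`
  nlinarith

end SimpleGraph

theorem stmt7 {V : Type} [Fintype V] [DecidableEq V] (G : SimpleGraph V)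
    [DecidableRel G.Adj] (n : ℕ) (hodd : Odd n) (V1 V2 : Finset V)
    (hdisj : Disjoint V1 V2) (hunion : V1 ∪ V2 = Finset.univ)
    (hc1 : V1.card = n) (hc2 : V2.card = n)
    (hbip : ∀ u v, G.Adj u v → (u ∈ V1 ∧ v ∈ V2) ∨ (u ∈ V2 ∧ v ∈ V1))
    (hdeg : ∀ v, n + 2 ≤ 2 * G.degree v)
    (S : Finset V) (hS : S.card = n + 1) :
    (G.induce (S : Set V)).IsAcyclic ↔ min (S ∩ V1).card (S ∩ V2).card = 1 := by
  obtain ⟨m, rfl⟩ := hodd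
  have hB : G.IsBipartiteWith ↑V1 ↑V2 := ⟨disjoint_coe.mpr hdisj, hbip⟩
  have hSU : S ⊆ V1 ∪ V2 := hunion ▸ subset_univ S
  have hsplit := card_inter_add_card_inter_of_subset_union hdisj hSU
  have hle1 : #(S ∩ V1) ≤ 2 * m + 1 := hc1 ▸ card_le_card inter_subset_right
  have hle2 : #(S ∩ V2) ≤ 2 * m + 1 := hc2 ▸ card_le_card inter_subset_right
  have hmindeg : ∀ v, m + 2 ≤ G.degree v := fun v => by have := hdeg v; omega
  constructor
  · intro hac
    by_contra hmin
    rcases le_or_gt #(S ∩ V1) (m + 1) with h1 | h1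
    · exact hB.not_isAcyclic_induce hc2 (fun v _ => hmindeg v) hSU hS (by omega) h1 hac
    · exact hB.symm.not_isAcyclic_induce hc1 (fun v _ => hmindeg v) (union_comm V1 V2 ▸ hSU) hS
        (by omega) (by omega) hac
  · intro hmin
    rcases (by omega : #(S ∩ V1) = 1 ∨ #(S ∩ V2) = 1) with h | h
    · exact hB.symm.isAcyclic_induce_of_card_inter_eq_one h
    · exact hB.isAcyclic_induce_of_card_inter_eq_one h
end

section
/- For every integer k ≥ 2 there exist infinitely many balanced bipartite graphs G with minimum degree exactly k and forest number f(G) = |V(G)|/2 + 2. -/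
/-!
Take `G = K_{k,k} ⊔ K_{m-k,m-k}` with `m ≥ 2k`; its minimum degree is `k`. A set inducing a
forest meets one side of each complete bipartite block in at most one vertex, since two vertices
on each side span a 4-cycle; hence it has at most `(k + 1) + (m - k + 1) = m + 2` vertices.
Conversely, one whole side together with one vertex of the other side in each block induces two
disjoint stars.
-/

open Finset SimpleGraph

/-- The forest number of `G`: the maximum size of a vertex subset inducing an acyclic
(induced) subgraph. -/
noncomputable def forestNum {V : Type} [Fintype V] (G : SimpleGraph V) : ℕ :=
  sSup {k | ∃ S : Finset V, S.card = k ∧ (G.induce (S : Set V)).IsAcyclic}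

namespace SimpleGraph

variable {V : Type*} {G : SimpleGraph V}

theorem isAcyclic_of_subsingleton_neighborSet {p : V → Prop}
    (hbip : ∀ ⦃u v⦄, G.Adj u v → (p u ↔ ¬ p v))
    (hleaf : ∀ v, p v → (G.neighborSet v).Subsingleton) : G.IsAcyclic := by
  classical
  -- a cycle through `v` gives `v` the two distinct neighbours `c.snd` and `c.penultimate`
  have hnot : ∀ v (c : G.Walk v v), c.IsCycle → ¬ p v := fun v c hc hv =>
    hc.snd_ne_penultimate <|
      hleaf v hv (c.adj_snd hc.not_nil) (c.adj_penultimate hc.not_nil).symm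
  intro v c hc
  have hsnd : c.snd ∈ c.support := List.mem_of_mem_tail (c.snd_mem_tail_support hc.not_nil)
  exact hnot _ (c.rotate _ hsnd) (hc.rotate hsnd)
    ((hbip (c.adj_snd hc.not_nil).symm).mpr (hnot v c hc))

theorem card_le_one_or_card_le_one_of_isAcyclic_induce {s : Set V}
    (hs : (G.induce s).IsAcyclic) {X Y : Finset V} (hX : ↑X ⊆ s) (hY : ↑Y ⊆ s)
    (hXY : ∀ x ∈ X, ∀ y ∈ Y, G.Adj x y) : #X ≤ 1 ∨ #Y ≤ 1 := by
  by_contra! h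
  obtain ⟨a, ha, b, hb, hab⟩ := one_lt_card.mp h.1
  obtain ⟨c, hc, d, hd, hcd⟩ := one_lt_card.mp h.2
  let pathVia (y : V) (hy : y ∈ Y) : (G.induce s).Path ⟨a, hX ha⟩ ⟨b, hX hb⟩ :=
    ⟨.cons (show (G.induce s).Adj ⟨a, hX ha⟩ ⟨y, hY hy⟩ from hXY a ha y hy)
      (.cons (show (G.induce s).Adj ⟨y, hY hy⟩ ⟨b, hX hb⟩ from (hXY b hb y hy).symm) .nil), by
      have := (hXY a ha y hy).ne
      have := (hXY b hb y hy).ne'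
      simp_all [Walk.cons_isPath_iff]⟩
  have hpath := (hs.subsingleton_path _ _).elim (pathVia c hc) (pathVia d hd)
  exact hcd (congrArg (fun p => p.1.snd.1) hpath)

theorem card_inter_union_le_of_isAcyclic_induce [DecidableEq V] {S A B : Finset V} {r : ℕ}
    (hS : (G.induce ↑S).IsAcyclic) (hAB : ∀ a ∈ A, ∀ b ∈ B, G.Adj a b)
    (hA : #A ≤ r) (hB : #B ≤ r) : #(S ∩ (A ∪ B)) ≤ r + 1 := by
  have hSA : #(S ∩ A) ≤ r := (card_le_card inter_subset_right).trans hA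
  have hSB : #(S ∩ B) ≤ r := (card_le_card inter_subset_right).trans hB
  have := card_le_one_or_card_le_one_of_isAcyclic_induce hS
    (coe_subset.mpr inter_subset_left) (coe_subset.mpr inter_subset_left)
    (fun a ha b hb => hAB a (mem_inter.mp ha).2 b (mem_inter.mp hb).2)
  calc #(S ∩ (A ∪ B)) = #(S ∩ A ∪ S ∩ B) := by rw [inter_union_distrib_left]
    _ ≤ #(S ∩ A) + #(S ∩ B) := card_union_le _ _
    _ ≤ r + 1 := by omega

end SimpleGraph

def finIco (n a b : ℕ) : Finset (Fin n) := {v | a ≤ (v : ℕ) ∧ (v : ℕ) < b}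

@[simp]
theorem mem_finIco {n a b : ℕ} {v : Fin n} :
    v ∈ finIco n a b ↔ a ≤ (v : ℕ) ∧ (v : ℕ) < b := by
  simp [finIco]

theorem card_finIco_le {n a b : ℕ} : #(finIco n a b) ≤ b - a := by
  rw [← Nat.card_Ico, ← card_map Fin.valEmbedding]
  refine card_le_card fun i hi => ?_
  obtain ⟨v, hv, rfl⟩ := mem_map.mp hi
  simpa using hv

theorem card_finIco {n a b : ℕ} (hb : b ≤ n) : #(finIco n a b) = b - a := by
  rw [← Nat.card_Ico, ← card_map Fin.valEmbedding]
  congr 1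
  ext i
  simp only [mem_map, mem_finIco, Fin.valEmbedding_apply, mem_Ico]
  exact ⟨fun ⟨v, hv, hvi⟩ => hvi ▸ hv, fun hi => ⟨⟨i, by omega⟩, hi, rfl⟩⟩

theorem SimpleGraph.degree_eq_of_adj_iff_mem_finIco {n a b : ℕ} {G : SimpleGraph (Fin n)}
    [DecidableRel G.Adj] {v : Fin n} (hb : b ≤ n) (h : ∀ u, G.Adj v u ↔ u ∈ finIco n a b) :
    G.degree v = b - a := by
  rw [← card_neighborFinset_eq_degree, ← card_finIco hb]
  congr 1
  ext u
  rw [mem_neighborFinset, h]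

section TwoBlock

variable {m k : ℕ}

def InFirstBlock (m k : ℕ) (v : Fin (2 * m)) : Prop :=
  (v : ℕ) < k ∨ m ≤ (v : ℕ) ∧ (v : ℕ) < m + k

instance (v : Fin (2 * m)) : Decidable (InFirstBlock m k v) := by
  unfold InFirstBlock; infer_instance

/-- `K_{k,k}` on `[0, k) ∪ [m, m + k)` together with `K_{m-k,m-k}` on the remaining vertices,
with sides `{v < m}` and `{m ≤ v}`. -/
def twoBlockGraph (m k : ℕ) : SimpleGraph (Fin (2 * m)) where
  Adj u v := ((u : ℕ) < m ↔ ¬ (v : ℕ) < m) ∧ (InFirstBlock m k u ↔ InFirstBlock m k v)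
  symm := ⟨fun _ _ h => ⟨by tauto, h.2.symm⟩⟩
  loopless := ⟨fun _ h => by tauto⟩

theorem twoBlockGraph_adj {u v : Fin (2 * m)} : (twoBlockGraph m k).Adj u v ↔
    ((u : ℕ) < m ↔ ¬ (v : ℕ) < m) ∧ (InFirstBlock m k u ↔ InFirstBlock m k v) := Iff.rfl

instance : DecidableRel (twoBlockGraph m k).Adj := fun _ _ => by
  rw [twoBlockGraph_adj]; infer_instance

theorem degree_twoBlockGraph (hkm : k ≤ m) (v : Fin (2 * m)) :
    (twoBlockGraph m k).degree v = if InFirstBlock m k v then k else m - k := by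
  have hv := v.isLt
  -- the neighbourhood of `v` is the part of its block on the other side
  rw [degree_eq_of_adj_iff_mem_finIco
    (a := (if (v : ℕ) < m then m else 0) + if InFirstBlock m k v then 0 else k)
    (b := (if (v : ℕ) < m then m else 0) + if InFirstBlock m k v then k else m)]
  · split_ifs <;> omega
  · split_ifs <;> omega
  · intro u
    have hu := u.isLt
    split_ifs <;> simp only [twoBlockGraph_adj, InFirstBlock, mem_finIco] at * <;> omega

theorem card_le_of_isAcyclic_induce_twoBlockGraph (hkm : k ≤ m) {S : Finset (Fin (2 * m))}
    (hS : ((twoBlockGraph m k).induce ↑S).IsAcyclic) : #S ≤ m + 2 := by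
  have hfirst := card_inter_union_le_of_isAcyclic_induce hS (r := k)
    (A := finIco _ 0 k) (B := finIco _ m (m + k))
    (fun a ha b hb => by
      simp only [mem_finIco] at ha hb
      simp only [twoBlockGraph_adj, InFirstBlock]
      omega)
    (card_finIco_le.trans (by omega)) (card_finIco_le.trans (by omega))
  have hsecond := card_inter_union_le_of_isAcyclic_induce hS (r := m - k)
    (A := finIco _ k m) (B := finIco _ (m + k) (2 * m))
    (fun a ha b hb => by
      simp only [mem_finIco] at ha hb
      simp only [twoBlockGraph_adj, InFirstBlock]
      omega)
    (card_finIco_le.trans (by omega)) (card_finIco_le.trans (by omega))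
  have hcover : S ⊆ S ∩ (finIco _ 0 k ∪ finIco _ m (m + k)) ∪
      S ∩ (finIco _ k m ∪ finIco _ (m + k) (2 * m)) := by
    intro v hv
    have := v.isLt
    simp only [mem_union, mem_inter, mem_finIco, hv, true_and]
    omega
  calc #S ≤ _ := card_le_card hcover
    _ ≤ _ := card_union_le _ _
    _ ≤ m + 2 := by omega

/-- The side `{v < m}` with the vertices `m` and `m + k` added: two disjoint stars. -/
theorem isAcyclic_induce_twoBlockGraph :
    ((twoBlockGraph m k).induce
      ↑(finIco (2 * m) 0 (m + 1) ∪ finIco (2 * m) (m + k) (m + k + 1))).IsAcyclic := by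
  refine isAcyclic_of_subsingleton_neighborSet (p := fun v => (v : Fin (2 * m)) < m)
    (fun u v h => h.1) fun v hv u hu w hw => ?_
  have huS := u.2
  have hwS := w.2
  simp only [coe_union, Set.mem_union, mem_coe, mem_finIco] at huS hwS
  simp only [mem_neighborSet, comap_adj, Function.Embedding.subtype_apply, twoBlockGraph_adj,
    InFirstBlock] at hu hw
  exact Subtype.ext (Fin.ext (by omega))

theorem forestNum_twoBlockGraph (hk : 0 < k) (hkm : k < m) :
    forestNum (twoBlockGraph m k) = m + 2 := by
  refine IsGreatest.csSup_eq ⟨⟨_, ?_, isAcyclic_induce_twoBlockGraph⟩, ?_⟩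
  · rw [card_union_of_disjoint (disjoint_left.mpr fun v h₁ h₂ => by
      simp only [mem_finIco] at h₁ h₂; omega), card_finIco (by omega), card_finIco (by omega)]
    omega
  · rintro _ ⟨S, rfl, hS⟩
    exact card_le_of_isAcyclic_induce_twoBlockGraph hkm.le hS

end TwoBlock

theorem stmt12 (k : ℕ) (hk : 2 ≤ k) (N : ℕ) :
    ∃ m : ℕ, N ≤ m ∧
      ∃ (G : SimpleGraph (Fin (2 * m))) (_ : DecidableRel G.Adj)
        (V1 V2 : Finset (Fin (2 * m))),
        Disjoint V1 V2 ∧ V1 ∪ V2 = Finset.univ ∧ V1.card = m ∧ V2.card = m ∧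
        (∀ u v, G.Adj u v → (u ∈ V1 ∧ v ∈ V2) ∨ (u ∈ V2 ∧ v ∈ V1)) ∧
        (∀ v, k ≤ G.degree v) ∧ (∃ v, G.degree v = k) ∧
        forestNum G = m + 2 := by
  obtain ⟨m, hNm, hkm⟩ : ∃ m, N ≤ m ∧ 2 * k ≤ m :=
    ⟨max N (2 * k), le_max_left .., le_max_right ..⟩
  refine ⟨m, hNm, twoBlockGraph m k, inferInstance, finIco _ 0 m, finIco _ m (2 * m),
    disjoint_left.mpr fun v h₁ h₂ => ?_, eq_univ_of_forall fun v => ?_,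
    (card_finIco (by omega)).trans (by omega), (card_finIco le_rfl).trans (by omega),
    fun u v huv => ?_, fun v => ?_, ⟨⟨0, by omega⟩, ?_⟩,
    forestNum_twoBlockGraph (by omega) (by omega)⟩
  · simp only [mem_finIco] at h₁ h₂
    omega
  · have := v.isLt
    simp only [mem_union, mem_finIco]
    omega
  · have := u.isLt
    have := v.isLt
    simp only [twoBlockGraph_adj] at huv
    simp only [mem_finIco]
    omega
  · rw [degree_twoBlockGraph (by omega)]
    split_ifs <;> omega
  · rw [degree_twoBlockGraph (by omega),
      if_pos (show InFirstBlock m k ⟨0, _⟩ from Or.inl (show 0 < k by omega))]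
end

section
/- Let B be a balanced bipartite graph with parts V1, V2 of size n each, where n is odd, minimum degree at least (n+1)/2, and in each part at most one vertex has degree exactly (n+1)/2. Then the forest number of B equals n + 1. -/
open Finset SimpleGraph

lemma Finset.card_mul_add_one_le_sum_add_one {ι : Type*} (A : Finset ι) (f : ι → ℕ) (k : ℕ)
    (hk : ∀ i ∈ A, k ≤ f i) (hfew : #{i ∈ A | f i = k} ≤ 1) :
    #A * (k + 1) ≤ ∑ i ∈ A, f i + 1 :=
  calc #A * (k + 1) = ∑ _i ∈ A, (k + 1) := by rw [sum_const, smul_eq_mul]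
    _ ≤ ∑ i ∈ A, (f i + if f i = k then 1 else 0) :=
        sum_le_sum fun i hi => by have := hk i hi; split_ifs <;> omega
    _ = ∑ i ∈ A, f i + #{i ∈ A | f i = k} := by rw [sum_add_distrib, sum_boole, Nat.cast_id]
    _ ≤ ∑ i ∈ A, f i + 1 := by omega

namespace SimpleGraph

variable {V : Type*}

lemma isAcyclic_of_forall_adj {G : SimpleGraph V} (r : V)
    (h : ∀ x y, G.Adj x y → x = r ∨ y = r) : G.IsAcyclic :=
  (isAcyclic_starGraph r).anti fun x y hxy => starGraph_adj.mpr ⟨hxy.ne, h x y hxy⟩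

lemma IsAcyclic.card_edgeFinset_lt [Fintype V] [Nonempty V] {G : SimpleGraph V}
    [Fintype G.edgeSet] (hG : G.IsAcyclic) : #G.edgeFinset < Fintype.card V := by
  classical
  obtain ⟨T, hGT, -, hT⟩ := connected_top.exists_isTree_le_of_le_of_isAcyclic le_top hG
  rw [← hT.card_edgeFinset]
  exact Nat.lt_succ_of_le (card_le_card (edgeFinset_mono hGT))

lemma IsBipartiteWith.isAcyclic_induce_insert [DecidableEq V] {G : SimpleGraph V}
    {s t : Finset V} (hG : G.IsBipartiteWith s t) (u : V) :
    (G.induce ((insert u s : Finset V) : Set V)).IsAcyclic := by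
  refine isAcyclic_of_forall_adj ⟨u, by simp⟩ ?_
  rintro ⟨x, hx⟩ ⟨y, hy⟩ hxy
  simp only [coe_insert, Set.mem_insert_iff, mem_coe, Subtype.mk.injEq] at hx hy ⊢
  rcases hx with rfl | hx
  · exact .inl rfl
  rcases hy with rfl | hy
  · exact .inr rfl
  exact absurd (hG.mem_of_mem_adj (mem_coe.mpr hx) hxy)
    (Set.disjoint_left.mp hG.disjoint hy)

variable [Fintype V] [DecidableEq V] {G : SimpleGraph V} [DecidableRel G.Adj]

lemma degree_induce_coe (S : Finset V) (v : ↥(S : Set V)) :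
    (G.induce (S : Set V)).degree v = #(G.neighborFinset v ∩ S) := by
  convert congrArg card (map_neighborFinset_induce (G := G) v) using 1
  · rw [card_map, card_neighborFinset_eq_degree]
    congr!
  · simp

lemma degree_le_card_neighborFinset_inter_add_card_sdiff {v : V} {S T : Finset V}
    (hv : G.neighborFinset v ⊆ T) : G.degree v ≤ #(G.neighborFinset v ∩ S) + #(T \ S) := by
  rw [← card_neighborFinset_eq_degree]
  refine (card_le_card fun w hw => ?_).trans (card_union_le _ _)
  by_cases hwS : w ∈ S
  · exact mem_union_left _ (mem_inter.mpr ⟨hw, hwS⟩)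
  · exact mem_union_right _ (mem_sdiff.mpr ⟨hv hw, hwS⟩)

namespace IsBipartiteWith

variable {s t : Finset V}

lemma card_edgeFinset_induce (hG : G.IsBipartiteWith s t) (S : Finset V) :
    #(G.induce (S : Set V)).edgeFinset = ∑ v ∈ S ∩ s, #(G.neighborFinset v ∩ S) := by
  let sS : Finset ↥(S : Set V) := {x | ↑x ∈ s}
  let tS : Finset ↥(S : Set V) := {x | ↑x ∈ t}
  have hH : (G.induce (S : Set V)).IsBipartiteWith sS tS := by
    refine ⟨?_, fun x y hxy => by simpa [sS, tS] using hG.mem_of_adj hxy⟩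
    simp only [sS, tS, coe_filter, Set.disjoint_left]
    exact fun v hvs hvt => Set.disjoint_left.mp hG.disjoint hvs.2 hvt.2
  rw [← isBipartiteWith_sum_degrees_eq_card_edges hH, sum_filter, ← filter_mem_eq_inter,
    sum_filter]
  simp only [degree_induce_coe]
  exact sum_coe_sort S fun v => if v ∈ s then #(G.neighborFinset v ∩ S) else 0

lemma card_le_add_one_of_isAcyclic_induce {n : ℕ} (hG : G.IsBipartiteWith s t)
    (ht : #t = n) (hdeg : ∀ v ∈ s, n + 1 ≤ 2 * G.degree v)
    (hfew : #{v ∈ s | 2 * G.degree v = n + 1} ≤ 1)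
    {S : Finset V} (hS : S ⊆ s ∪ t) (hst : #(S ∩ s) ≤ #(S ∩ t))
    (hac : (G.induce (S : Set V)).IsAcyclic) : #S ≤ n + 1 := by
  by_contra! hlarge
  have hsplit : #(S ∩ s) + #(S ∩ t) = #S := by
    rw [← card_union_of_disjoint (disjoint_coe.mp hG.disjoint |>.mono inter_subset_right
      inter_subset_right), ← inter_union_distrib_left, inter_eq_left.mpr hS]
  have hrest : #(S ∩ t) + #(t \ S) = n := by rw [inter_comm, card_inter_add_card_sdiff, ht]
  have hedges : ∑ v ∈ S ∩ s, #(G.neighborFinset v ∩ S) < #S := by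
    have : Nonempty ↥(S : Set V) := (card_pos.mp (by omega)).to_subtype
    simpa [← hG.card_edgeFinset_induce] using hac.card_edgeFinset_lt
  have hdeg_le : ∑ v ∈ S ∩ s, G.degree v ≤ ∑ v ∈ S ∩ s, #(G.neighborFinset v ∩ S) +
      #(S ∩ s) * #(t \ S) := by
    rw [← smul_eq_mul, ← sum_const, ← sum_add_distrib]
    refine sum_le_sum fun v hv => degree_le_card_neighborFinset_inter_add_card_sdiff ?_
    exact fun w hw => hG.mem_of_mem_adj (mem_coe.mpr (mem_inter.mp hv).2)
      ((mem_neighborFinset _ _ _).mp hw)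
  have hdeg_ge : #(S ∩ s) * (n + 2) ≤ ∑ v ∈ S ∩ s, 2 * G.degree v + 1 :=
    card_mul_add_one_le_sum_add_one _ _ _ (fun v hv => hdeg v (mem_inter.mp hv).2)
      ((card_le_card (filter_subset_filter _ inter_subset_right)).trans hfew)
  rw [← mul_sum] at hdeg_ge
  -- For `a, b, c = #(S ∩ s), #(S ∩ t), #(t \ S)` the bounds combine to
  -- `a * b + 1 ≤ 2 * b + a * c`, while `c + 2 ≤ a ≤ b` gives `a * b ≥ a * c + 2 * b`.
  nlinarith [Nat.mul_le_mul_right #(S ∩ t) (by omega : #(t \ S) + 2 ≤ #(S ∩ s)),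
    Nat.mul_le_mul_left #(t \ S) hst]

end IsBipartiteWith

end SimpleGraph

lemma forestNum_eq_of_isGreatest {V : Type} [Fintype V] {G : SimpleGraph V} {k : ℕ}
    (hmem : ∃ S : Finset V, #S = k ∧ (G.induce (S : Set V)).IsAcyclic)
    (hle : ∀ S : Finset V, (G.induce (S : Set V)).IsAcyclic → #S ≤ k) : forestNum G = k :=
  IsGreatest.csSup_eq ⟨hmem, by rintro _ ⟨S, rfl, hS⟩; exact hle S hS⟩

theorem stmt13 {V : Type} [Fintype V] [DecidableEq V] (G : SimpleGraph V)
    [DecidableRel G.Adj] (n : ℕ) (hodd : Odd n) (V1 V2 : Finset V)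
    (hdisj : Disjoint V1 V2) (hunion : V1 ∪ V2 = Finset.univ)
    (hc1 : V1.card = n) (hc2 : V2.card = n)
    (hbip : ∀ u v, G.Adj u v → (u ∈ V1 ∧ v ∈ V2) ∨ (u ∈ V2 ∧ v ∈ V1))
    (hdeg : ∀ v, n + 1 ≤ 2 * G.degree v)
    (hfew1 : (V1.filter fun v => 2 * G.degree v = n + 1).card ≤ 1)
    (hfew2 : (V2.filter fun v => 2 * G.degree v = n + 1).card ≤ 1) :
    forestNum G = n + 1 := by
  have hG : G.IsBipartiteWith V1 V2 :=
    ⟨disjoint_coe.mpr hdisj, fun u v h => by simpa using hbip u v h⟩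
  obtain ⟨u, hu⟩ : V2.Nonempty := card_pos.mp (hc2 ▸ hodd.pos)
  refine forestNum_eq_of_isGreatest ⟨insert u V1, ?_, hG.isAcyclic_induce_insert u⟩
    fun S hS => ?_
  · rw [card_insert_of_notMem (disjoint_right.mp hdisj hu), hc1]
  have hcover : S ⊆ V1 ∪ V2 := hunion ▸ subset_univ S
  rcases le_total #(S ∩ V1) #(S ∩ V2) with h | h
  · exact hG.card_le_add_one_of_isAcyclic_induce hc2 (fun v _ => hdeg v) hfew1 hcover h hS
  · exact hG.symm.card_le_add_one_of_isAcyclic_induce hc1 (fun v _ => hdeg v) hfew2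
      (union_comm V1 V2 ▸ hcover) h hS
end

section
/- Let B be a balanced bipartite graph with parts V1, V2 of size n each (n odd), minimum degree at least (n+1)/2, and at most one vertex of degree exactly (n+1)/2 in each part. For every vertex subset S of size n + 2 with |S ∩ V2| = k where 2 ≤ k ≤ (n+1)/2, the number of edges of B inside S is at least (n+1)/2 + 2 − k + (k−1)((n+1)/2 + 3 − k), which is at least n + 2. -/
/-!
Every vertex `v` of `S ∩ V2` has all its neighbours in `V1`, and only `k - 2` vertices of `V1`
lie outside `S`, so `v` has at least `deg v - (k - 2)` neighbours in `S ∩ V1`: at least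
`(n + 1) / 2 + 3 - k`, except for the one possible vertex of degree `(n + 1) / 2`. The pairs
`(v, u)` with `v ∈ S ∩ V2`, `u ∈ S ∩ V1` adjacent are distinct edges of `S`, so there are at least
`k * ((n + 1) / 2 + 3 - k) - 1` of them, which is the stated bound.
-/

open Finset SimpleGraph

namespace SimpleGraph

variable {V : Type*} (G : SimpleGraph V)

theorem card_interedges_eq_sum [DecidableEq V] [DecidableRel G.Adj] (s t : Finset V) :
    #(G.interedges s t) = ∑ v ∈ s, #{u ∈ t | G.Adj v u} := by
  rw [interedges, Rel.interedges_eq_biUnion, card_biUnion]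
  · simp only [card_map]
  · intro x _ y _ hxy
    simp only [Finset.disjoint_left, mem_map, Function.Embedding.coeFn_mk]
    rintro _ ⟨_, _, rfl⟩ ⟨_, _, h⟩
    exact hxy (Prod.ext_iff.mp h).1.symm

theorem card_interedges_le_ncard_edgeSet_induce [Finite V] [DecidableRel G.Adj] {S : Set V}
    {s t : Finset V} (hst : Disjoint s t) (hs : ↑s ⊆ S) (ht : ↑t ⊆ S) :
    #(G.interedges s t) ≤ (G.induce S).edgeSet.ncard := by
  rw [← Set.ncard_image_of_injective _ (Sym2.map.injective Subtype.val_injective),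
    ← Set.ncard_coe_finset]
  refine Set.ncard_le_ncard_of_injOn (fun e => s(e.1, e.2)) ?_ ?_
  · intro e he
    obtain ⟨h1, h2, hadj⟩ := (G.mem_interedges_iff).mp he
    exact ⟨s(⟨e.1, hs h1⟩, ⟨e.2, ht h2⟩), hadj, rfl⟩
  · intro e he e' he' h
    obtain ⟨h1, h2, -⟩ := (G.mem_interedges_iff).mp he
    obtain ⟨h1', h2', -⟩ := (G.mem_interedges_iff).mp he'
    rcases Sym2.eq_iff.mp h with ⟨h₁, h₂⟩ | ⟨h₁, -⟩
    · exact Prod.ext h₁ h₂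
    · exact absurd (h₁ ▸ h1) (Finset.disjoint_left.mp hst.symm h2')

theorem degree_le_card_filter_adj_add_card_sdiff {v : V} [Fintype (G.neighborSet v)]
    [DecidableEq V] {X : Finset V} (hX : G.neighborFinset v ⊆ X) (B : Finset V)
    [DecidablePred (G.Adj v)] :
    G.degree v ≤ #{u ∈ B | G.Adj v u} + #(X \ B) := by
  rw [← card_neighborFinset_eq_degree]
  refine (card_le_card fun u hu => ?_).trans (card_union_le _ _)
  by_cases huB : u ∈ B
  · exact mem_union_left _ (mem_filter.mpr ⟨huB, (mem_neighborFinset ..).mp hu⟩)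
  · exact mem_union_right _ (mem_sdiff.mpr ⟨hX hu, huB⟩)

end SimpleGraph

namespace Finset

variable {α : Type*} {s : Finset α} {p : α → Prop} [DecidablePred p] {f : α → ℕ} {c : ℕ}

theorem card_mul_le_sum_add_card_filter (h : ∀ a ∈ s, c ≤ f a + 1)
    (hp : ∀ a ∈ s, ¬ p a → c ≤ f a) : #s * c ≤ ∑ a ∈ s, f a + #{a ∈ s | p a} := by
  calc #s * c = ∑ a ∈ s, c := by rw [sum_const, smul_eq_mul]
    _ ≤ ∑ a ∈ s, (f a + if p a then 1 else 0) := by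
      refine sum_le_sum fun a ha => ?_
      split_ifs with hpa
      exacts [h a ha, by simpa using hp a ha hpa]
    _ = ∑ a ∈ s, f a + #{a ∈ s | p a} := by rw [sum_add_distrib, sum_boole, Nat.cast_id]

end Finset

theorem edge_bound_add_one_eq_and_le {m k : ℕ} (hk : 2 ≤ k) (hkm : k ≤ m) :
    m + 2 - k + (k - 1) * (m + 3 - k) + 1 = k * (m + 3 - k) ∧
      2 * m + 1 ≤ m + 2 - k + (k - 1) * (m + 3 - k) := by
  obtain ⟨j, rfl⟩ : ∃ j, k = j + 2 := ⟨k - 2, by omega⟩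
  obtain ⟨i, rfl⟩ : ∃ i, m = j + 2 + i := ⟨m - (j + 2), by omega⟩
  rw [show j + 2 + i + 2 - (j + 2) = i + 2 by omega,
    show j + 2 + i + 3 - (j + 2) = i + 3 by omega, show j + 2 - 1 = j + 1 by omega]
  constructor
  · ring
  · nlinarith

theorem stmt19_general {V : Type} [Fintype V] [DecidableEq V] (G : SimpleGraph V)
    [DecidableRel G.Adj] (n : ℕ) (hodd : Odd n) (V1 V2 : Finset V)
    (hdisj : Disjoint V1 V2) (hunion : V1 ∪ V2 = Finset.univ)
    (hc1 : V1.card = n)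
    (hbip : ∀ u v, G.Adj u v → (u ∈ V1 ∧ v ∈ V2) ∨ (u ∈ V2 ∧ v ∈ V1))
    (hdeg : ∀ v, n + 1 ≤ 2 * G.degree v)
    (hfew2 : (V2.filter fun v => 2 * G.degree v = n + 1).card ≤ 1)
    (S : Finset V) (hS : S.card = n + 2) (k : ℕ) (hk : (S ∩ V2).card = k)
    (hk2 : 2 ≤ k) (hk3 : 2 * k ≤ n + 1) :
    ((n + 1) / 2 + 2 - k + (k - 1) * ((n + 1) / 2 + 3 - k) ≤
        ((G.induce (S : Set V)).edgeSet).ncard) ∧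
      n + 2 ≤ (n + 1) / 2 + 2 - k + (k - 1) * ((n + 1) / 2 + 3 - k) := by
  obtain ⟨j, rfl⟩ := hodd
  rw [show (2 * j + 1 + 1) / 2 = j + 1 by omega]
  have hSV1 : #(S ∩ V1) = 2 * j + 1 + 2 - k := by
    have : #(S ∩ V1 ∪ S ∩ V2) = #(S ∩ V1) + #(S ∩ V2) :=
      card_union_of_disjoint (hdisj.mono inter_subset_right inter_subset_right)
    rw [← inter_union_distrib_left, hunion, inter_univ] at this
    omega
  have hmiss : ∀ v ∈ S ∩ V2, G.degree v ≤ #{u ∈ S ∩ V1 | G.Adj v u} + (k - 2) := by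
    intro v hv
    have hN : G.neighborFinset v ⊆ V1 := fun u hu => by
      rcases hbip v u ((G.mem_neighborFinset v u).mp hu) with ⟨hv1, -⟩ | ⟨-, hu1⟩
      · exact absurd (mem_inter.mp hv).2 (disjoint_left.mp hdisj hv1)
      · exact hu1
    have := G.degree_le_card_filter_adj_add_card_sdiff hN (S ∩ V1)
    rwa [card_sdiff_of_subset inter_subset_right, hSV1, hc1,
      show 2 * j + 1 - (2 * j + 1 + 2 - k) = k - 2 by omega] at this
  have hsum : k * (j + 1 + 3 - k) ≤ ∑ v ∈ S ∩ V2, #{u ∈ S ∩ V1 | G.Adj v u} + 1 := by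
    calc k * (j + 1 + 3 - k)
        ≤ ∑ v ∈ S ∩ V2, #{u ∈ S ∩ V1 | G.Adj v u} +
            #{v ∈ S ∩ V2 | 2 * G.degree v = 2 * j + 1 + 1} := by
          rw [← hk]
          exact card_mul_le_sum_add_card_filter
            (fun v hv => by have := hmiss v hv; have := hdeg v; omega)
            (fun v hv _ => by have := hmiss v hv; have := hdeg v; omega)
      _ ≤ _ := by
          gcongr
          exact (card_le_card (filter_subset_filter _ inter_subset_right)).trans hfew2
  have hedges := G.card_interedges_le_ncard_edgeSet_induce
    (hdisj.symm.mono inter_subset_right inter_subset_right)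
    (coe_subset.mpr (inter_subset_left (s₁ := S) (s₂ := V2)))
    (coe_subset.mpr (inter_subset_left (s₁ := S) (s₂ := V1)))
  rw [card_interedges_eq_sum] at hedges
  obtain ⟨hbound, hle⟩ := edge_bound_add_one_eq_and_le hk2 (show k ≤ j + 1 by omega)
  exact ⟨by omega, by omega⟩

theorem stmt19 {V : Type} [Fintype V] [DecidableEq V] (G : SimpleGraph V)
    [DecidableRel G.Adj] (n : ℕ) (hodd : Odd n) (V1 V2 : Finset V)
    (hdisj : Disjoint V1 V2) (hunion : V1 ∪ V2 = Finset.univ)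
    (hc1 : V1.card = n) (hc2 : V2.card = n)
    (hbip : ∀ u v, G.Adj u v → (u ∈ V1 ∧ v ∈ V2) ∨ (u ∈ V2 ∧ v ∈ V1))
    (hdeg : ∀ v, n + 1 ≤ 2 * G.degree v)
    (hfew1 : (V1.filter fun v => 2 * G.degree v = n + 1).card ≤ 1)
    (hfew2 : (V2.filter fun v => 2 * G.degree v = n + 1).card ≤ 1)
    (S : Finset V) (hS : S.card = n + 2) (k : ℕ) (hk : (S ∩ V2).card = k)
    (hk2 : 2 ≤ k) (hk3 : 2 * k ≤ n + 1) :
    ((n + 1) / 2 + 2 - k + (k - 1) * ((n + 1) / 2 + 3 - k) ≤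
        ((G.induce (S : Set V)).edgeSet).ncard) ∧
      n + 2 ≤ (n + 1) / 2 + 2 - k + (k - 1) * ((n + 1) / 2 + 3 - k) :=
  stmt19_general G n hodd V1 V2 hdisj hunion hc1 hbip hdeg hfew2 S hS k hk hk2 hk3
end
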